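/- arXiv:2312.04358 — 4 statements merged into one kernel-verified Lean document; each statement's English description precedes it below -/
import Mathlib

section
/- Let n be a natural number and let Q, R, S be symmetric n×n real matrices. For n×n real matrices A and B, define the off-diagonal Pearson correlation ρ(A,B) as the Pearson correlation of the two families of real numbers (A i j) and (B i j) indexed by the ordered pairs (i,j) with i ≠ j, i.e. ρ(A,B) = (∑_{i≠j} (A i j − Ā)(B i j − B̄)) / sqrt((∑_{i≠j} (A i j − Ā)²)·(∑_{i≠j} (B i j − B̄)²)), where Ā and B̄ are the means of A and B over the off-diagonal positions. Assume that the off-diagonal entries of Q are not all equal, that the off-diagonal entries of the matrix product R·S are not all equal, and n ≥ 2. Then ρ(Q, R·S) = ρ(Q, S·R), where R·S and S·R denote matrix products. (This is the undirected-graph content of the paper's Theorem 1: the balance correlations of the twin triad signatures <q.rs> and <q.sr> are identical in every network.) -/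
/-- The mean of the entries of a square matrix over its off-diagonal positions. -/
noncomputable def offDiagMean {n : ℕ} (A : Matrix (Fin n) (Fin n) ℝ) : ℝ :=
  (∑ p ∈ (Finset.univ : Finset (Fin n)).offDiag, A p.1 p.2) /
    ((Finset.univ : Finset (Fin n)).offDiag.card : ℝ)

/-- The off-diagonal Pearson correlation of two square matrices: the Pearson
correlation of the families `(A i j)` and `(B i j)` indexed by ordered pairs
`(i, j)` with `i ≠ j`. -/
noncomputable def offDiagCorr {n : ℕ} (A B : Matrix (Fin n) (Fin n) ℝ) : ℝ :=
  (∑ p ∈ (Finset.univ : Finset (Fin n)).offDiag,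
      (A p.1 p.2 - offDiagMean A) * (B p.1 p.2 - offDiagMean B)) /
    Real.sqrt
      ((∑ p ∈ (Finset.univ : Finset (Fin n)).offDiag, (A p.1 p.2 - offDiagMean A) ^ 2) *
        (∑ p ∈ (Finset.univ : Finset (Fin n)).offDiag, (B p.1 p.2 - offDiagMean B) ^ 2))

/-- Twin theorem for undirected (symmetric) relations: the balance correlations
of `<q.rs>` and `<q.sr>` coincide in every network. -/
theorem balanceCorr_twin_symm {n : ℕ} (hn : 2 ≤ n)
    (Q R S : Matrix (Fin n) (Fin n) ℝ)
    (hQ : ∀ i j, Q i j = Q j i) (hR : ∀ i j, R i j = R j i) (hS : ∀ i j, S i j = S j i)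
    (hQne : ∃ i j k l : Fin n, i ≠ j ∧ k ≠ l ∧ Q i j ≠ Q k l)
    (hRSne : ∃ i j k l : Fin n, i ≠ j ∧ k ≠ l ∧ (R * S) i j ≠ (R * S) k l) :
    offDiagCorr Q (R * S) = offDiagCorr Q (S * R) := by
  have hswap : ∀ f : Fin n → Fin n → ℝ,
      ∑ p ∈ (Finset.univ : Finset (Fin n)).offDiag, f p.1 p.2 =
      ∑ p ∈ (Finset.univ : Finset (Fin n)).offDiag, f p.2 p.1 := by
    intro f
    exact Finset.sum_nbij' (fun p => (p.2, p.1)) (fun p => (p.2, p.1))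
      (by intro p hp; simp [Finset.mem_offDiag] at *; exact fun h => hp h.symm)
      (by intro p hp; simp [Finset.mem_offDiag] at *; exact fun h => hp h.symm)
      (by intro p _; rfl) (by intro p _; rfl) (by intro p _; rfl)
  have hSR : ∀ i j, (S * R) i j = (R * S) j i := by
    intro i j
    simp only [Matrix.mul_apply]
    rw [Finset.sum_congr rfl (fun k _ => by rw [hS i k, hR k j, mul_comm])]
  have hmean : offDiagMean (S * R) = offDiagMean (R * S) := by
    unfold offDiagMean
    rw [hswap (fun i j => (S * R) i j)]
    simp only [hSR]
  unfold offDiagCorr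
  rw [hmean]
  rw [hswap (fun i j => (Q i j - offDiagMean Q) * ((S * R) i j - offDiagMean (R * S))),
    hswap (fun i j => ((S * R) i j - offDiagMean (R * S)) ^ 2)]
  simp only [hSR]
  congr 1
  · exact Finset.sum_congr rfl fun p _ => by rw [hQ p.2 p.1]
end

section
/- Let n be a natural number, m ≥ 2, and let M_1, …, M_m be n×n matrices whose entries all lie in {0,1}, with zero diagonal, and such that ∑_{q=1}^{m} (M_q) i j = 1 for every ordered pair (i,j) with i ≠ j. For indices r, s define the nugget U_{rs} by (U_{rs}) i j = (M_r) i j · (M_s) j i. Then: (a) for every r, the nugget U_{rr} is a symmetric matrix; and (b) for r ≠ s, the nugget U_{rs} is symmetric if and only if U_{rs} is the zero matrix. Consequently, if every nugget U_{rs} with r ≠ s is nonzero, then among the m² nuggets exactly the m nuggets U_{rr} are symmetric and exactly the m² − m nuggets U_{rs} with r ≠ s are not symmetric. (This is the paper's Lemma 1 on the count of symmetric and asymmetric nuggets.) -/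
/-- The nugget of a pair of matrices: the Hadamard product of `M r` with the
transpose of `M s`. -/
def nugget {n m : ℕ} (M : Fin m → Matrix (Fin n) (Fin n) ℝ) (r s : Fin m) :
    Matrix (Fin n) (Fin n) ℝ :=
  Matrix.of fun i j => M r i j * M s j i

/-- Lemma on symmetric and asymmetric nuggets: for a partition of the complete
graph into `{0,1}`-relations, `U_{rr}` is always symmetric, `U_{rs}` with
`r ≠ s` is symmetric iff it is zero, and hence if all off-diagonal nuggets are
nonzero there are exactly `m` symmetric nuggets and `m² - m` asymmetric ones. -/
theorem nugget_symm_count {n m : ℕ} (hm : 2 ≤ m)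
    (M : Fin m → Matrix (Fin n) (Fin n) ℝ)
    (h01 : ∀ q i j, M q i j = 0 ∨ M q i j = 1)
    (hdiag : ∀ q i, M q i i = 0)
    (hpart : ∀ i j : Fin n, i ≠ j → ∑ q, M q i j = 1) :
    (∀ r, (nugget M r r).IsSymm) ∧
    (∀ r s : Fin m, r ≠ s → ((nugget M r s).IsSymm ↔ nugget M r s = 0)) ∧
    ((∀ r s : Fin m, r ≠ s → nugget M r s ≠ 0) →
      Set.ncard {p : Fin m × Fin m | (nugget M p.1 p.2).IsSymm} = m ∧
      Set.ncard {p : Fin m × Fin m | ¬(nugget M p.1 p.2).IsSymm} = m ^ 2 - m) := by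
  have hsymm_diag : ∀ r, (nugget M r r).IsSymm := by
    intro r
    ext i j
    simp [nugget, Matrix.transpose_apply, mul_comm]
  have hiff : ∀ r s : Fin m, r ≠ s → ((nugget M r s).IsSymm ↔ nugget M r s = 0) := by
    intro r s hrs
    constructor
    · intro hsym
      ext i j
      by_contra hne
      have hij : i ≠ j := by
        rintro rfl
        exact hne (by simp [nugget, hdiag])
      have hval : M r i j * M s j i ≠ 0 := by simpa [nugget] using hne
      have hr1 : M r i j = 1 := by
        rcases h01 r i j with h | h
        · exact absurd (by simp [h]) hval
        · exact h
      have hs1 : M s j i = 1 := by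
        rcases h01 s j i with h | h
        · exact absurd (by simp [h]) hval
        · exact h
      -- symmetry gives M r j i * M s i j = 1
      have hsym' : M r j i * M s i j = M r i j * M s j i := by
        have := congrFun (congrFun hsym j) i
        simpa [nugget, Matrix.transpose_apply] using this.symm
      have hr1' : M r j i = 1 := by
        rcases h01 r j i with h | h
        · rw [h, hr1, hs1] at hsym'; simp at hsym'
        · exact h
      -- now sum over q of M q j i ≥ 2
      have hsum := hpart j i hij.symm
      have hle : M r j i + M s j i ≤ ∑ q, M q j i := by
        have : ∑ q ∈ ({r, s} : Finset (Fin m)), M q j i ≤ ∑ q, M q j i := by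
          apply Finset.sum_le_sum_of_subset_of_nonneg (Finset.subset_univ _)
          intro q _ _
          rcases h01 q j i with h | h <;> simp [h]
        simpa [Finset.sum_pair hrs] using this
      rw [hsum, hr1', hs1] at hle
      norm_num at hle
    · intro h; rw [h]; exact Matrix.isSymm_zero
  refine ⟨hsymm_diag, hiff, fun hnz => ?_⟩
  have hset : {p : Fin m × Fin m | (nugget M p.1 p.2).IsSymm} =
      Set.range (fun r : Fin m => (r, r)) := by
    ext ⟨r, s⟩
    simp only [Set.mem_setOf_eq, Set.mem_range, Prod.mk.injEq]
    constructor
    · intro h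
      by_cases hrs : r = s
      · exact ⟨r, rfl, hrs⟩
      · exact absurd ((hiff r s hrs).mp h) (hnz r s hrs)
    · rintro ⟨q, rfl, rfl⟩
      exact hsymm_diag q
  have hcard : Set.ncard {p : Fin m × Fin m | (nugget M p.1 p.2).IsSymm} = m := by
    rw [hset]
    have hinj : Function.Injective (fun r : Fin m => (r, r)) := fun a b h => (Prod.mk.injEq a a b b ▸ h).1
    rw [← Set.image_univ, Set.ncard_image_of_injective _ hinj, Set.ncard_univ]
    simp
  refine ⟨hcard, ?_⟩
  have hcompl : {p : Fin m × Fin m | ¬(nugget M p.1 p.2).IsSymm} =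
      {p : Fin m × Fin m | (nugget M p.1 p.2).IsSymm}ᶜ := by
    ext p; simp
  rw [hcompl]
  have htot := Set.ncard_add_ncard_compl {p : Fin m × Fin m | (nugget M p.1 p.2).IsSymm}
  rw [hcard] at htot
  have : Nat.card (Fin m × Fin m) = m ^ 2 := by simp [Nat.card_eq_fintype_card, sq]
  omega
end

section
/- Let N be a natural number and let x, y : Fin N → ℝ be vectors whose entries all lie in {0,1}. Let A = #{i : x i = 1 ∧ y i = 1}, B = #{i : x i = 1 ∧ y i = 0}, C = #{i : x i = 0 ∧ y i = 1}, D = #{i : x i = 0 ∧ y i = 0}, viewed as real numbers, with A+B > 0, C+D > 0, A+C > 0, B+D > 0. Then the Pearson correlation ρ(x,y) equals s · sqrt( (A/(A+C) − B/(B+D)) · (A/(A+B) − C/(C+D)) ), where s = 1 if A/(A+C) − B/(B+D) > 0, s = 0 if A/(A+C) − B/(B+D) = 0, and s = −1 if A/(A+C) − B/(B+D) < 0. (This is the paper's Equation (5): the balance correlation is the signed geometric mean of the two conditional-probability differences.) -/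
open Finset

/-- The mean of a finite family of reals. -/
noncomputable def vecMean {N : ℕ} (x : Fin N → ℝ) : ℝ := (∑ i, x i) / N

/-- The Pearson correlation of two finite families of reals. -/
noncomputable def pearsonCorr {N : ℕ} (x y : Fin N → ℝ) : ℝ :=
  (∑ i, (x i - vecMean x) * (y i - vecMean y)) /
    Real.sqrt ((∑ i, (x i - vecMean x) ^ 2) * (∑ i, (y i - vecMean y) ^ 2))

lemma sum_centered_mul {N : ℕ} (x y : Fin N → ℝ) :
    ∑ i, (x i - vecMean x) * (y i - vecMean y)
      = ∑ i, x i * y i - (∑ i, x i) * (∑ i, y i) / N := by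
  rcases Nat.eq_zero_or_pos N with h | h
  · subst h; simp
  · have hN : (N : ℝ) ≠ 0 := by positivity
    simp only [vecMean]
    have key : ∀ i : Fin N, (x i - (∑ j, x j) / N) * (y i - (∑ j, y j) / N)
        = x i * y i - ((∑ j, x j) / N) * y i - ((∑ j, y j) / N) * x i
          + ((∑ j, x j) / N) * ((∑ j, y j) / N) := fun i => by ring
    rw [Finset.sum_congr rfl fun i _ => key i]
    rw [Finset.sum_add_distrib, Finset.sum_sub_distrib, Finset.sum_sub_distrib,
      ← Finset.mul_sum, ← Finset.mul_sum, Finset.sum_const, Finset.card_univ,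
      Fintype.card_fin, nsmul_eq_mul]
    field_simp
    ring

/-- The paper's Equation (5): the balance correlation is the signed geometric
mean of the two conditional-probability differences of the 2×2
cross-tabulation of ties versus conditional 2-paths. -/
theorem balanceCorr_eq_signed_geometric_mean {N : ℕ} (x y : Fin N → ℝ)
    (hx : ∀ i, x i = 0 ∨ x i = 1) (hy : ∀ i, y i = 0 ∨ y i = 1)
    (A B C D : ℝ)
    (hA : A = ((Finset.univ.filter fun i => x i = 1 ∧ y i = 1).card : ℝ))
    (hB : B = ((Finset.univ.filter fun i => x i = 1 ∧ y i = 0).card : ℝ))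
    (hC : C = ((Finset.univ.filter fun i => x i = 0 ∧ y i = 1).card : ℝ))
    (hD : D = ((Finset.univ.filter fun i => x i = 0 ∧ y i = 0).card : ℝ))
    (hAB : 0 < A + B) (hCD : 0 < C + D) (hAC : 0 < A + C) (hBD : 0 < B + D)
    (s : ℝ)
    (hs : s = if 0 < A / (A + C) - B / (B + D) then 1
          else if A / (A + C) - B / (B + D) = 0 then 0 else -1) :
    pearsonCorr x y =
      s * Real.sqrt ((A / (A + C) - B / (B + D)) * (A / (A + B) - C / (C + D))) := by
  -- counts as sums
  have hA' : A = ∑ i, x i * y i := by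
    rw [hA, ← Finset.sum_boole]
    refine Finset.sum_congr rfl fun i _ => ?_
    rcases hx i with h1 | h1 <;> rcases hy i with h2 | h2 <;> simp [h1, h2]
  have hB' : B = ∑ i, x i * (1 - y i) := by
    rw [hB, ← Finset.sum_boole]
    refine Finset.sum_congr rfl fun i _ => ?_
    rcases hx i with h1 | h1 <;> rcases hy i with h2 | h2 <;> simp [h1, h2]
  have hC' : C = ∑ i, (1 - x i) * y i := by
    rw [hC, ← Finset.sum_boole]
    refine Finset.sum_congr rfl fun i _ => ?_
    rcases hx i with h1 | h1 <;> rcases hy i with h2 | h2 <;> simp [h1, h2]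
  have hD' : D = ∑ i, (1 - x i) * (1 - y i) := by
    rw [hD, ← Finset.sum_boole]
    refine Finset.sum_congr rfl fun i _ => ?_
    rcases hx i with h1 | h1 <;> rcases hy i with h2 | h2 <;> simp [h1, h2]
  have hN : (N : ℝ) = A + B + C + D := by
    rw [hA', hB', hC', hD', ← Finset.sum_add_distrib, ← Finset.sum_add_distrib,
      ← Finset.sum_add_distrib]
    rw [show (N : ℝ) = ∑ _i : Fin N, (1 : ℝ) by simp]
    exact Finset.sum_congr rfl fun i _ => by ring
  have hSx : ∑ i, x i = A + B := by
    rw [hA', hB', ← Finset.sum_add_distrib]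
    exact Finset.sum_congr rfl fun i _ => by ring
  have hSy : ∑ i, y i = A + C := by
    rw [hA', hC', ← Finset.sum_add_distrib]
    exact Finset.sum_congr rfl fun i _ => by ring
  have hSxx : ∑ i, x i ^ 2 = A + B := by
    rw [← hSx]
    exact Finset.sum_congr rfl fun i _ => by rcases hx i with h | h <;> simp [h]
  have hSyy : ∑ i, y i ^ 2 = A + C := by
    rw [← hSy]
    exact Finset.sum_congr rfl fun i _ => by rcases hy i with h | h <;> simp [h]
  have hNpos : 0 < (N : ℝ) := by rw [hN]; linarith
  have hNne : (N : ℝ) ≠ 0 := ne_of_gt hNpos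
  set E := A * D - B * C with hE
  have h0 : A + B + C + D ≠ 0 := by rw [← hN]; exact hNne
  -- numerator and denominators
  have hnum : ∑ i, (x i - vecMean x) * (y i - vecMean y) = E / N := by
    rw [sum_centered_mul, ← hA', hSx, hSy, hE, hN]
    field_simp
    ring
  have hden1 : ∑ i, (x i - vecMean x) ^ 2 = (A + B) * (C + D) / N := by
    have h := sum_centered_mul x x
    simp only [← sq] at h
    rw [h, hSxx, hSx, hN]
    field_simp
    ring
  have hden2 : ∑ i, (y i - vecMean y) ^ 2 = (A + C) * (B + D) / N := by
    have h := sum_centered_mul y y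
    simp only [← sq] at h
    rw [h, hSyy, hSy, hN]
    field_simp
    ring
  set P := ((A + B) * (C + D)) * ((A + C) * (B + D)) with hP
  have hPpos : 0 < P := by positivity
  have hd1 : A / (A + C) - B / (B + D) = E / ((A + C) * (B + D)) := by
    field_simp
    ring
  have hd2 : A / (A + B) - C / (C + D) = E / ((A + B) * (C + D)) := by
    field_simp
    ring
  have hsqrtP : 0 < Real.sqrt P := Real.sqrt_pos.mpr hPpos
  -- LHS
  have hLHS : pearsonCorr x y = E / Real.sqrt P := by
    rw [pearsonCorr, hnum, hden1, hden2]
    rw [show (A + B) * (C + D) / ↑N * ((A + C) * (B + D) / ↑N) = P / (N : ℝ) ^ 2 by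
      rw [hP]; field_simp]
    rw [Real.sqrt_div hPpos.le, Real.sqrt_sq hNpos.le]
    rw [div_div_div_comm, div_self hNne, div_one]
  -- RHS
  have hRHS : s * Real.sqrt ((A / (A + C) - B / (B + D)) * (A / (A + B) - C / (C + D)))
      = E / Real.sqrt P := by
    rw [hd1, hd2, show E / ((A + C) * (B + D)) * (E / ((A + B) * (C + D))) = E ^ 2 / P by
      rw [hP]; field_simp]
    rw [Real.sqrt_div (sq_nonneg E), Real.sqrt_sq_eq_abs]
    have hdpos : 0 < (A + C) * (B + D) := by positivity
    have hpos_iff : 0 < E / ((A + C) * (B + D)) ↔ 0 < E := by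
      rw [lt_div_iff₀ hdpos]; simp
    have hzero_iff : E / ((A + C) * (B + D)) = 0 ↔ E = 0 := by
      rw [div_eq_zero_iff]; simp [ne_of_gt hdpos]
    rw [hs, hd1]
    rcases lt_trichotomy E 0 with h | h | h
    · rw [if_neg (fun hcon => absurd (hpos_iff.mp hcon) (not_lt.mpr h.le)),
        if_neg (fun hcon => absurd (hzero_iff.mp hcon) (ne_of_lt h)),
        abs_of_neg h]
      ring
    · simp [h, hzero_iff.mpr h]
    · rw [if_pos (hpos_iff.mpr h), abs_of_pos h]; ring
  rw [hLHS, hRHS]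
end

section
/- Let S be a finite type with m elements, let N = S × S (the type of nuggets, i.e. ordered pairs of relation types, where the pair (a,b) has transpose (b,a)), and consider the set N³ of ordered triples of nuggets. Define the map τ : N³ → N³ by τ((a,b), (c,d), (e,f)) = ((b,a), (f,e), (d,c)), i.e. transpose the first nugget, and transpose and swap the second and third nuggets. Then τ is an involution; its fixed points are exactly the triples in which the first nugget is symmetric (a = b) and the third nugget is the transpose of the second ((e,f) = (d,c)), so there are exactly m³ fixed points; the remaining m⁶ − m³ triples are partitioned into two-element orbits; and the total number of orbits of τ on N³ is m³·(m³ + 1)/2. In particular, for m = 3 there are 3⁶ = 729 directed triad signatures, of which exactly 27 have no distinguishable twin and exactly 702 have exactly one twin. (This is the paper's cardinality claim under the asymmetric assumption, Equation for |𝔅| = ½·m³·(m³+1), and its directed-graph claim of 729, 702 and 27.) -/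
section Aux

variable {X : Type*}

lemma orbit_eq_or_disjoint {τ : X → X} (hτ : Function.Involutive τ) (x y : X) :
    ({x, τ x} : Set X) = {y, τ y} ∨ Disjoint ({x, τ x} : Set X) {y, τ y} := by
  by_cases h : Disjoint ({x, τ x} : Set X) {y, τ y}
  · exact Or.inr h
  · left
    rw [Set.not_disjoint_iff] at h
    obtain ⟨z, hz1, hz2⟩ := h
    simp only [Set.mem_insert_iff, Set.mem_singleton_iff] at hz1 hz2
    rcases hz1 with rfl | rfl <;> rcases hz2 with h | h
    · rw [h]
    · rw [h, hτ y, Set.pair_comm]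
    · rw [← h, hτ x, Set.pair_comm]
    · rw [hτ.injective h]

lemma two_mul_orbits [Fintype X] [DecidableEq X] {τ : X → X}
    (hτ : Function.Involutive τ) :
    2 * Set.ncard {O : Set X | ∃ x, O = {x, τ x}} =
      Fintype.card X + Set.ncard {x | τ x = x} := by
  classical
  set g : X → Set X := fun x => {x, τ x} with hg
  have hgτ : ∀ x, g (τ x) = g x := fun x => by simp [hg, hτ x, Set.pair_comm]
  set F : Finset X := Finset.univ.filter (fun x => τ x = x) with hF
  set M : Finset X := Finset.univ.filter (fun x => ¬ τ x = x) with hM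
  have hFM : F.card + M.card = Fintype.card X := by
    rw [hF, hM]
    simpa using Finset.card_filter_add_card_filter_not (s := Finset.univ)
      (p := fun x => τ x = x)
  -- the orbit set is the image of g
  have hset : {O : Set X | ∃ x, O = g x} = ↑(Finset.univ.image g) := by
    ext O
    simp [eq_comm]
  have hsplit : Finset.univ.image g = F.image g ∪ M.image g := by
    rw [← Finset.image_union, hF, hM, Finset.filter_union_filter_not_eq]
  have hgfix : ∀ x ∈ F, g x = {x} := by
    intro x hx
    rw [hF, Finset.mem_filter] at hx
    simp [hg, hx.2]
  have hdisj : Disjoint (F.image g) (M.image g) := by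
    rw [Finset.disjoint_left]
    rintro s hs1 hs2
    obtain ⟨x, hx, rfl⟩ := Finset.mem_image.mp hs1
    obtain ⟨y, hy, hxy⟩ := Finset.mem_image.mp hs2
    rw [hM, Finset.mem_filter] at hy
    rw [hgfix x hx] at hxy
    have hyx : y = x := by
      have : y ∈ ({x} : Set X) := by rw [← hxy]; simp [hg]
      simpa using this
    have hτy : τ y = x := by
      have : τ y ∈ ({x} : Set X) := by rw [← hxy]; simp [hg]
      simpa using this
    exact hy.2 (hτy.trans hyx.symm)
  have hcardF : (F.image g).card = F.card := by
    apply Finset.card_image_of_injOn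
    intro x hx y hy hxy
    rw [hgfix x hx, hgfix y hy] at hxy
    simpa using hxy
  have hcardM : M.card = 2 * (M.image g).card := by
    rw [Finset.card_eq_sum_card_image g M]
    have hfib : ∀ s ∈ M.image g, (M.filter (fun x => g x = s)).card = 2 := by
      intro s hs
      obtain ⟨x, hx, rfl⟩ := Finset.mem_image.mp hs
      rw [hM, Finset.mem_filter] at hx
      have hne : x ≠ τ x := fun h => hx.2 h.symm
      have : M.filter (fun y => g y = g x) = {x, τ x} := by
        ext y
        rw [Finset.mem_filter, hM, Finset.mem_filter]
        constructor
        · rintro ⟨-, hgy⟩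
          have : y ∈ g x := by rw [← hgy]; simp [hg]
          simpa [hg] using this
        · intro hy
          simp only [Finset.mem_insert, Finset.mem_singleton] at hy
          rcases hy with rfl | rfl
          · exact ⟨⟨Finset.mem_univ _, hx.2⟩, rfl⟩
          · refine ⟨⟨Finset.mem_univ _, fun h => ?_⟩, hgτ x⟩
            exact hx.2 (((hτ x).symm.trans h).symm)
      rw [this, Finset.card_insert_of_notMem (by simpa using hne),
        Finset.card_singleton]
    rw [Finset.sum_congr rfl hfib, Finset.sum_const, smul_eq_mul, mul_comm]
  have hfixset : {x | τ x = x} = ↑F := by ext x; simp [hF]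
  rw [show {O : Set X | ∃ x, O = {x, τ x}} = {O : Set X | ∃ x, O = g x} from rfl,
    hset, Set.ncard_coe_finset, hfixset, Set.ncard_coe_finset, hsplit,
    Finset.card_union_of_disjoint hdisj, hcardF]
  omega

end Aux

/-- Cardinality of twin structure on directed triad signatures: on triples of
nuggets (ordered pairs of relation types), the map that transposes the first
nugget and transposes-and-swaps the other two is an involution, its fixed
points are exactly the triples whose first nugget is symmetric and whose third
nugget is the transpose of the second (there are `m³` of them), all other
`m⁶ - m³` triples lie in two-element orbits, and the total number of orbits
(distinct balance statements) is `m³(m³+1)/2`. -/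
theorem directed_triad_signature_twins {S : Type*} [Fintype S] (m : ℕ)
    (hm : Fintype.card S = m) :
    Function.Involutive
      (fun x : (S × S) × (S × S) × (S × S) =>
        ((x.1.2, x.1.1), (x.2.2.2, x.2.2.1), (x.2.1.2, x.2.1.1))) ∧
    {x : (S × S) × (S × S) × (S × S) |
        ((x.1.2, x.1.1), (x.2.2.2, x.2.2.1), (x.2.1.2, x.2.1.1)) = x} =
      {x : (S × S) × (S × S) × (S × S) |
        x.1.1 = x.1.2 ∧ x.2.2 = (x.2.1.2, x.2.1.1)} ∧
    Set.ncard {x : (S × S) × (S × S) × (S × S) |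
        ((x.1.2, x.1.1), (x.2.2.2, x.2.2.1), (x.2.1.2, x.2.1.1)) = x} = m ^ 3 ∧
    Set.ncard {x : (S × S) × (S × S) × (S × S) |
        ((x.1.2, x.1.1), (x.2.2.2, x.2.2.1), (x.2.1.2, x.2.1.1)) ≠ x} = m ^ 6 - m ^ 3 ∧
    (∀ x : (S × S) × (S × S) × (S × S),
      ((x.1.2, x.1.1), (x.2.2.2, x.2.2.1), (x.2.1.2, x.2.1.1)) ≠ x →
      Set.ncard
        ({x, ((x.1.2, x.1.1), (x.2.2.2, x.2.2.1), (x.2.1.2, x.2.1.1))} :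
          Set ((S × S) × (S × S) × (S × S))) = 2) ∧
    (∀ x y : (S × S) × (S × S) × (S × S),
      ({x, ((x.1.2, x.1.1), (x.2.2.2, x.2.2.1), (x.2.1.2, x.2.1.1))} :
          Set ((S × S) × (S × S) × (S × S))) =
        {y, ((y.1.2, y.1.1), (y.2.2.2, y.2.2.1), (y.2.1.2, y.2.1.1))} ∨
      Disjoint
        ({x, ((x.1.2, x.1.1), (x.2.2.2, x.2.2.1), (x.2.1.2, x.2.1.1))} :
          Set ((S × S) × (S × S) × (S × S)))
        {y, ((y.1.2, y.1.1), (y.2.2.2, y.2.2.1), (y.2.1.2, y.2.1.1))}) ∧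
    Set.ncard {O : Set ((S × S) × (S × S) × (S × S)) |
        ∃ x : (S × S) × (S × S) × (S × S),
          O = {x, ((x.1.2, x.1.1), (x.2.2.2, x.2.2.1), (x.2.1.2, x.2.1.1))}} =
      m ^ 3 * (m ^ 3 + 1) / 2 := by
  classical
  set τ : (S × S) × (S × S) × (S × S) → (S × S) × (S × S) × (S × S) := fun x =>
    ((x.1.2, x.1.1), (x.2.2.2, x.2.2.1), (x.2.1.2, x.2.1.1)) with hτdef
  have hτ : Function.Involutive τ := by
    intro x; rfl
  have hcardX : Fintype.card ((S × S) × (S × S) × (S × S)) = m ^ 6 := by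
    simp [Fintype.card_prod, hm]; ring
  have hNatX : Nat.card ((S × S) × (S × S) × (S × S)) = m ^ 6 := by
    rw [Nat.card_eq_fintype_card, hcardX]
  -- fixed set characterization
  have hfixeq : {x : (S × S) × (S × S) × (S × S) | τ x = x} =
      {x : (S × S) × (S × S) × (S × S) | x.1.1 = x.1.2 ∧ x.2.2 = (x.2.1.2, x.2.1.1)} := by
    ext ⟨⟨a, b⟩, ⟨c, d⟩, ⟨e, f⟩⟩
    simp only [hτdef, Set.mem_setOf_eq, Prod.mk.injEq]
    exact ⟨fun h => ⟨h.1.2, h.2.1.2, h.2.1.1⟩,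
      fun h => ⟨⟨h.1.symm, h.1⟩, ⟨h.2.2, h.2.1⟩, h.2.1.symm, h.2.2.symm⟩⟩
  -- fixed set cardinality
  have hfixcard : Set.ncard {x : (S × S) × (S × S) × (S × S) | τ x = x} = m ^ 3 := by
    have hrange : {x : (S × S) × (S × S) × (S × S) | τ x = x} =
        Set.range (fun p : S × S × S =>
          (((p.1, p.1), (p.2.1, p.2.2), (p.2.2, p.2.1)) : (S × S) × (S × S) × (S × S))) := by
      rw [hfixeq]
      ext ⟨⟨a, b⟩, ⟨c, d⟩, ⟨e, f⟩⟩
      simp only [Set.mem_setOf_eq, Set.mem_range, Prod.mk.injEq]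
      constructor
      · rintro ⟨h1, h2, h3⟩
        exact ⟨⟨a, c, d⟩, ⟨rfl, h1⟩, ⟨rfl, rfl⟩, h2.symm, h3.symm⟩
      · rintro ⟨⟨p, q, r⟩, hpq⟩
        simp only [Prod.mk.injEq] at hpq
        obtain ⟨⟨rfl, rfl⟩, ⟨rfl, rfl⟩, rfl, rfl⟩ := hpq
        exact ⟨rfl, rfl, rfl⟩
    have hinj : Function.Injective (fun p : S × S × S =>
        (((p.1, p.1), (p.2.1, p.2.2), (p.2.2, p.2.1)) : (S × S) × (S × S) × (S × S))) := by
      rintro ⟨a, c, d⟩ ⟨a', c', d'⟩ h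
      simp only [Prod.mk.injEq] at h
      obtain ⟨⟨h1, -⟩, ⟨h2, h3⟩, -⟩ := h
      simp [h1, h2, h3]
    rw [hrange, ← Set.image_univ, Set.ncard_image_of_injective _ hinj,
      Set.ncard_univ]
    simp [Nat.card_eq_fintype_card, Fintype.card_prod, hm]; ring
  refine ⟨hτ, ?_, ?_, ?_, ?_, ?_, ?_⟩
  · exact hfixeq
  · exact hfixcard
  · -- complement
    have hcompl : {x : (S × S) × (S × S) × (S × S) | τ x ≠ x} = {x : (S × S) × (S × S) × (S × S) | τ x = x}ᶜ := by
      ext x; simp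
    have := Set.ncard_add_ncard_compl {x : (S × S) × (S × S) × (S × S) | τ x = x} (Set.toFinite _)
      (Set.toFinite _)
    rw [hfixcard, hNatX] at this
    rw [hcompl]
    omega
  · intro x hx
    exact Set.ncard_pair (Ne.symm hx)
  · intro x y
    exact orbit_eq_or_disjoint hτ x y
  · have h2 := two_mul_orbits hτ
    rw [hcardX, hfixcard] at h2
    have hkey : m ^ 6 + m ^ 3 = m ^ 3 * (m ^ 3 + 1) := by ring
    rw [hkey] at h2
    set n := Set.ncard {O : Set ((S × S) × (S × S) × (S × S)) | ∃ x, O = {x, τ x}} with hn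
    set p := m ^ 3 * (m ^ 3 + 1) with hp
    omega
end
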